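/- arXiv:0905.0609 — 4 statements merged into one kernel-verified Lean document; each statement's English description precedes it below -/
import Mathlib

section
/- Let p ∈ (0,1), q = 1-p, and suppose the barrier satisfies liminf_{n→∞} b_n/n > q/p. Then ∑_{n ≥ 0} f(n) · p^{n+1} · q^{b_{n+1}+1} < 1 - q^{b_0+1}, i.e., the inequality of the probabilistic theorem is strict. -/
/-- The number of nondecreasing sequences `0 ≤ a 0 ≤ ⋯ ≤ a n` below the barrier `b`. -/
noncomputable def barrierSeqCount (b : ℕ → ℕ) (n : ℕ) : ℕ :=
  Nat.card {a : Fin (n + 1) → ℕ // Monotone a ∧ ∀ i, a i ≤ b i.1}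

/-!
Let the walk step right with probability `p` and up with probability `q`. A path whose right
steps occur at heights `a 0 ≤ ⋯ ≤ a N` has weight `p ^ (N + 1) * q ^ a N`, so summing over the
admissible sequences gives the probability `s N` of staying below the barrier during the first
`N + 1` right steps, and decomposing by the first crossing gives
`∑ n < N, f n * p ^ (n + 1) * q ^ (b (n + 1) + 1) + s N = 1 - q ^ (b 0 + 1)`.
The inequality is therefore strict as soon as `s` is bounded below by a positive constant.

Pick `q / p < θ < liminf b n / n`. The Chernoff bound
`(k + B).choose k * p ^ k * q ^ B ≤ (p / (1 - x)) ^ k * (q / x) ^ B`, with `x` slightly larger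
than `q` so that `p / (1 - x) * (q / x) ^ θ < 1`, makes the crossing terms of a barrier
`b j ≥ θ * (j + S)` decay geometrically with total mass `O((q / x) ^ (θ * S))`. For `S` large the
barrier shifted by `S` is thus survived with positive probability, and the walk can spend its
first `S` right steps at height `0`.
-/

open Finset Filter

lemma monotone_snoc {α : Type*} [Preorder α] {n : ℕ} {a : Fin (n + 1) → α} {m : α}
    (ha : Monotone a) (hm : a (Fin.last n) ≤ m) : Monotone (Fin.snoc a m : Fin (n + 2) → α) := by
  rw [Fin.monotone_iff_le_succ]
  refine Fin.lastCases ?_ (fun j => ?_)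
  · simpa [Fin.succ_last] using hm
  · rw [Fin.succ_castSucc, Fin.snoc_castSucc, Fin.snoc_castSucc]
    exact ha Fin.castSucc_lt_succ.le

open scoped Classical in
noncomputable def admissibleSeqs (b : ℕ → ℕ) (n : ℕ) : Finset (Fin (n + 1) → ℕ) :=
  {a ∈ Fintype.piFinset fun i : Fin (n + 1) => range (b i + 1) | Monotone a}

section Admissible

variable {b : ℕ → ℕ} {n : ℕ}

lemma mem_admissibleSeqs {a : Fin (n + 1) → ℕ} :
    a ∈ admissibleSeqs b n ↔ Monotone a ∧ ∀ i, a i ≤ b i := by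
  simp [admissibleSeqs, and_comm]

lemma card_admissibleSeqs (b : ℕ → ℕ) (n : ℕ) : #(admissibleSeqs b n) = barrierSeqCount b n := by
  rw [barrierSeqCount, ← Nat.card_eq_finsetCard]
  exact Nat.card_congr (Equiv.subtypeEquivRight fun _ => mem_admissibleSeqs.symm).symm

lemma sum_admissibleSeqs_zero {M : Type*} [AddCommMonoid M] (g : ℕ → M) :
    ∑ a ∈ admissibleSeqs b 0, g (a (Fin.last 0)) = ∑ m ∈ range (b 0 + 1), g m := by
  refine sum_nbij' (fun a => a 0) (fun m _ => m) (fun a ha => ?_) (fun m hm => ?_)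
    (fun a _ => funext fun i => by rw [Fin.fin_one_eq_zero i]) (fun _ _ => rfl) (fun _ _ => rfl)
  · simpa [Nat.lt_succ_iff] using (mem_admissibleSeqs.1 ha).2 0
  · refine mem_admissibleSeqs.2 ⟨monotone_const, fun i => ?_⟩
    simpa [Fin.fin_one_eq_zero i, Nat.lt_succ_iff] using hm

lemma sum_admissibleSeqs_succ {M : Type*} [AddCommMonoid M] (g : ℕ → M) :
    ∑ a ∈ admissibleSeqs b (n + 1), g (a (Fin.last (n + 1))) =
      ∑ a ∈ admissibleSeqs b n, ∑ j ∈ Icc (a (Fin.last n)) (b (n + 1)), g j := by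
  rw [sum_sigma']
  refine sum_nbij' (fun a => ⟨Fin.init a, a (Fin.last (n + 1))⟩) (fun x => Fin.snoc x.1 x.2)
    (fun a ha => ?_) (fun x hx => ?_) (fun a _ => Fin.snoc_init_self a)
    (fun x _ => by simp) (fun a _ => rfl)
  · obtain ⟨hmono, hbd⟩ := mem_admissibleSeqs.1 ha
    refine mem_sigma.2 ⟨mem_admissibleSeqs.2 ⟨hmono.comp Fin.strictMono_castSucc.monotone,
      fun i => hbd i.castSucc⟩, mem_Icc.2 ⟨hmono (Fin.le_last _), hbd (Fin.last (n + 1))⟩⟩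
  · obtain ⟨hx, hm⟩ := mem_sigma.1 hx
    obtain ⟨hmono, hbd⟩ := mem_admissibleSeqs.1 hx
    refine mem_admissibleSeqs.2 ⟨monotone_snoc hmono (mem_Icc.1 hm).1, Fin.lastCases ?_ ?_⟩
    · simpa using (mem_Icc.1 hm).2
    · simpa using hbd

lemma card_admissibleSeqs_le (hb : Monotone b) (n : ℕ) :
    #(admissibleSeqs b n) ≤ (n + 1 + b n).choose (n + 1) := by
  classical
  let lift : (Fin (n + 1) → ℕ) → Fin (n + 1) → ℕ := fun a i => a i + i
  have hlift : ∀ a ∈ admissibleSeqs b n, StrictMono (lift a) := fun a ha _ _ hij =>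
    add_lt_add_of_le_of_lt ((mem_admissibleSeqs.1 ha).1 hij.le) hij
  rw [← card_range (n + 1 + b n), ← card_powersetCard]
  refine card_le_card_of_injOn (fun a => univ.image (lift a)) (fun a ha => ?_)
    (fun a₁ h₁ a₂ h₂ h => ?_)
  · refine mem_powersetCard.2 ⟨fun m hm => ?_, ?_⟩
    · obtain ⟨i, -, rfl⟩ := mem_image.1 hm
      have := ((mem_admissibleSeqs.1 ha).2 i).trans (hb (Nat.lt_succ_iff.1 i.2))
      simp only [lift, mem_range]
      omega
    · rw [card_image_of_injective _ (hlift a ha).injective, card_univ, Fintype.card_fin]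
  · have hrange : Set.range (lift a₁) = Set.range (lift a₂) := by
      simpa [Set.image_univ] using congrArg ((↑) : Finset ℕ → Set ℕ) h
    funext i
    simpa [lift] using congrFun (((hlift a₁ h₁).range_inj (hlift a₂ h₂)).1 hrange) i

end Admissible

noncomputable def barrierSurvival (p q : ℝ) (b : ℕ → ℕ) (N : ℕ) : ℝ :=
  p ^ (N + 1) * ∑ a ∈ admissibleSeqs b N, q ^ a (Fin.last N)

section Survival

variable {p q : ℝ} {b : ℕ → ℕ}

lemma barrierSurvival_succ (hpq : p + q = 1) (hb : Monotone b) (n : ℕ) :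
    barrierSurvival p q b (n + 1) =
      barrierSurvival p q b n - barrierSeqCount b n * p ^ (n + 1) * q ^ (b (n + 1) + 1) := by
  have hgeom : ∀ a ∈ admissibleSeqs b n, p * ∑ j ∈ Icc (a (Fin.last n)) (b (n + 1)), q ^ j =
      q ^ a (Fin.last n) - q ^ (b (n + 1) + 1) := fun a ha => by
    have hlast : a (Fin.last n) ≤ b (n + 1) + 1 := by
      have := (mem_admissibleSeqs.1 ha).2 (Fin.last n)
      simp only [Fin.val_last] at this
      exact this.trans ((hb n.le_succ).trans (b (n + 1)).le_succ)
    rw [← Ico_add_one_right_eq_Icc, mul_comm, eq_sub_of_add_eq hpq, geom_sum_Ico_mul_neg q hlast]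
  rw [barrierSurvival, barrierSurvival, sum_admissibleSeqs_succ, pow_succ, mul_assoc, mul_sum,
    sum_congr rfl hgeom, sum_sub_distrib, sum_const, card_admissibleSeqs, nsmul_eq_mul]
  ring

lemma sum_range_add_barrierSurvival (hpq : p + q = 1) (hb : Monotone b) (N : ℕ) :
    ∑ n ∈ range N, (barrierSeqCount b n : ℝ) * p ^ (n + 1) * q ^ (b (n + 1) + 1) +
      barrierSurvival p q b N = 1 - q ^ (b 0 + 1) := by
  induction N with
  | zero =>
    rw [sum_range_zero, zero_add, barrierSurvival, pow_one, sum_admissibleSeqs_zero (g := (q ^ ·)),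
      eq_sub_of_add_eq hpq, mul_neg_geom_sum]
  | succ N ih => rw [sum_range_succ, barrierSurvival_succ hpq hb, ← ih]; ring

lemma barrierSurvival_antitone (hp : 0 ≤ p) (hq : 0 ≤ q) (hpq : p + q = 1) (hb : Monotone b) :
    Antitone (barrierSurvival p q b) :=
  antitone_nat_of_succ_le fun n => by
    rw [barrierSurvival_succ hpq hb]
    have : 0 ≤ (barrierSeqCount b n : ℝ) * p ^ (n + 1) * q ^ (b (n + 1) + 1) := by positivity
    linarith

lemma tsum_lt_of_le_barrierSurvival (hp : 0 ≤ p) (hq : 0 ≤ q) (hpq : p + q = 1)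
    (hb : Monotone b) {c : ℝ} (hc : 0 < c) (hsurv : ∀ N, c ≤ barrierSurvival p q b N) :
    ∑' n, (barrierSeqCount b n : ℝ) * p ^ (n + 1) * q ^ (b (n + 1) + 1) < 1 - q ^ (b 0 + 1) := by
  have : ∑' n, (barrierSeqCount b n : ℝ) * p ^ (n + 1) * q ^ (b (n + 1) + 1) ≤
      1 - q ^ (b 0 + 1) - c :=
    Real.tsum_le_of_sum_range_le (fun n => by positivity) fun N => by
      linarith [sum_range_add_barrierSurvival hpq hb N, hsurv N]
  linarith

lemma mul_barrierSurvival_tail_le (hp : 0 ≤ p) (hq : 0 ≤ q) (n : ℕ) :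
    p * barrierSurvival p q (fun j => b (j + 1)) n ≤ barrierSurvival p q b (n + 1) := by
  let cons0 : (Fin (n + 1) → ℕ) ↪ (Fin (n + 2) → ℕ) :=
    ⟨fun a => Fin.cons 0 a, Fin.cons_right_injective (α := fun _ => ℕ) 0⟩
  have hsub : (admissibleSeqs (fun j => b (j + 1)) n).map cons0 ⊆ admissibleSeqs b (n + 1) := by
    intro c hc
    obtain ⟨a, ha, rfl⟩ := mem_map.1 hc
    obtain ⟨hmono, hbd⟩ := mem_admissibleSeqs.1 ha
    refine mem_admissibleSeqs.2 ⟨monotone_vecCons.2 ⟨Nat.zero_le _, hmono⟩, Fin.cases ?_ ?_⟩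
    · exact Nat.zero_le _
    · simpa [cons0] using hbd
  rw [barrierSurvival, barrierSurvival, ← mul_assoc, ← pow_succ']
  gcongr
  calc ∑ a ∈ admissibleSeqs (fun j => b (j + 1)) n, q ^ a (Fin.last n)
      = ∑ c ∈ (admissibleSeqs (fun j => b (j + 1)) n).map cons0, q ^ c (Fin.last (n + 1)) := by
        simp [cons0, ← Fin.succ_last]
    _ ≤ _ := sum_le_sum_of_subset_of_nonneg hsub fun _ _ _ => pow_nonneg hq _

lemma pow_mul_barrierSurvival_shift_le (hp : 0 ≤ p) (hq : 0 ≤ q) (S n : ℕ) :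
    p ^ S * barrierSurvival p q (fun j => b (j + S)) n ≤ barrierSurvival p q b (n + S) := by
  induction S generalizing b with
  | zero => simp
  | succ S ih =>
    calc p ^ (S + 1) * barrierSurvival p q (fun j => b (j + (S + 1))) n
        = p * (p ^ S * barrierSurvival p q (fun j => b (j + S + 1)) n) := by
          simp only [pow_succ', mul_assoc, ← add_assoc]
      _ ≤ p * barrierSurvival p q (fun j => b (j + 1)) (n + S) := by
          gcongr
          exact ih (b := fun j => b (j + 1))
      _ ≤ barrierSurvival p q b (n + S + 1) := mul_barrierSurvival_tail_le hp hq _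

lemma le_barrierSurvival_of_shift (hp : 0 ≤ p) (hq : 0 ≤ q) (hpq : p + q = 1) (hb : Monotone b)
    {S : ℕ} {c : ℝ} (hsurv : ∀ M, c ≤ barrierSurvival p q (fun j => b (j + S)) M) (N : ℕ) :
    p ^ S * c ≤ barrierSurvival p q b N :=
  calc p ^ S * c ≤ p ^ S * barrierSurvival p q (fun j => b (j + S)) N := by gcongr; exact hsurv N
    _ ≤ barrierSurvival p q b (N + S) := pow_mul_barrierSurvival_shift_le hp hq S N
    _ ≤ barrierSurvival p q b N := barrierSurvival_antitone hp hq hpq hb (N.le_add_right S)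

end Survival

lemma choose_mul_pow_mul_pow_le {p q x : ℝ} (hp : 0 ≤ p) (hq : 0 ≤ q) (hx0 : 0 < x) (hx1 : x < 1)
    (k B : ℕ) : ((k + B).choose k : ℝ) * p ^ k * q ^ B ≤ (p / (1 - x)) ^ k * (q / x) ^ B := by
  have hx1' : 0 < 1 - x := sub_pos.2 hx1
  have hbinom : ((k + B).choose k : ℝ) * (1 - x) ^ k * x ^ B ≤ 1 := by
    have := single_le_sum (f := fun j => (1 - x) ^ j * x ^ (k + B - j) * ((k + B).choose j : ℝ))
      (fun j _ => by positivity) (mem_range.2 (by omega : k < k + B + 1))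
    rw [← add_pow, sub_add_cancel, one_pow, Nat.add_sub_cancel_left] at this
    linarith
  calc ((k + B).choose k : ℝ) * p ^ k * q ^ B
      = (p / (1 - x)) ^ k * (q / x) ^ B * (((k + B).choose k : ℝ) * (1 - x) ^ k * x ^ B) := by
        rw [div_pow, div_pow]
        field_simp
    _ ≤ (p / (1 - x)) ^ k * (q / x) ^ B := mul_le_of_le_one_right (by positivity) hbinom

lemma pow_le_rpow_pow {y θ : ℝ} (hy0 : 0 < y) (hy1 : y ≤ 1) {m B : ℕ} (h : θ * m ≤ B) :
    y ^ B ≤ (y ^ θ) ^ m := by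
  rw [← Real.rpow_natCast, ← Real.rpow_natCast, ← Real.rpow_mul hy0.le]
  exact Real.rpow_le_rpow_of_exponent_ge hy0 hy1 h

-- `x ↦ log (p / (1 - x) * (q / x) ^ θ)` vanishes at `x = q`, with derivative `1 / p - θ / q < 0`.
lemma exists_mul_rpow_lt_one {p q θ : ℝ} (hp : 0 < p) (hq : 0 < q) (hpq : p + q = 1)
    (hθ : q / p < θ) : ∃ x, q < x ∧ x < 1 ∧ p / (1 - x) * (q / x) ^ θ < 1 := by
  have hp' : 1 - q = p := by linarith
  let f : ℝ → ℝ := fun x => Real.log p - Real.log (1 - x) + θ * (Real.log q - Real.log x)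
  have hf : HasDerivAt f (1 / p - θ / q) q := by
    have h1 := ((hasDerivAt_id q).const_sub 1).log (by simp only [id, hp']; exact hp.ne')
    have h2 := Real.hasDerivAt_log hq.ne'
    refine ((h1.const_sub (Real.log p)).add
      ((h2.const_sub (Real.log q)).const_mul θ)).congr_deriv ?_
    simp only [id, hp']
    ring
  have hneg : 1 / p - θ / q < 0 := by
    rw [sub_neg, div_lt_div_iff₀ hp hq]
    rw [div_lt_iff₀ hp] at hθ
    linarith
  obtain ⟨x, hslope, hqx, hx1⟩ :=
    (((hf.hasDerivWithinAt (s := Set.Ioi q)).limsup_slope_le' (lt_irrefl q) hneg).and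
      (Ioo_mem_nhdsGT (by linarith : q < 1))).exists
  have hfq : f q = 0 := by simp [f, hp']
  have hfx : f x < 0 := by
    rwa [slope_def_field, hfq, sub_zero, div_lt_iff₀ (sub_pos.2 hqx), zero_mul] at hslope
  refine ⟨x, hqx, hx1, ?_⟩
  have hx0 : 0 < x := hq.trans hqx
  calc p / (1 - x) * (q / x) ^ θ = Real.exp (f x) := by
        rw [Real.exp_add, ← Real.log_div hp.ne' (by linarith), ← Real.log_div hq.ne' hx0.ne',
          Real.exp_log (div_pos hp (by linarith)), Real.rpow_def_of_pos (div_pos hq hx0),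
          mul_comm (Real.log (q / x)) θ, mul_comm]
    _ < 1 := Real.exp_lt_one_iff.2 hfx

section LinearBarrier

variable {p q : ℝ} {b : ℕ → ℕ}

lemma barrierSeqCount_mul_pow_mul_pow_le (hp : 0 ≤ p) (hq : 0 ≤ q) (hb : Monotone b) {x : ℝ}
    (hx0 : 0 < x) (hx1 : x < 1) (n : ℕ) :
    (barrierSeqCount b n : ℝ) * p ^ (n + 1) * q ^ (b (n + 1) + 1) ≤
      (p / (1 - x)) ^ (n + 1) * (q / x) ^ (b (n + 1) + 1) := by
  have hcard : barrierSeqCount b n ≤ (n + 1 + (b (n + 1) + 1)).choose (n + 1) := by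
    rw [← card_admissibleSeqs]
    exact (card_admissibleSeqs_le hb n).trans
      (Nat.choose_le_choose _ (by have : b n ≤ b (n + 1) := hb n.le_succ; omega))
  calc (barrierSeqCount b n : ℝ) * p ^ (n + 1) * q ^ (b (n + 1) + 1)
      ≤ ((n + 1 + (b (n + 1) + 1)).choose (n + 1) : ℝ) * p ^ (n + 1) * q ^ (b (n + 1) + 1) := by
        gcongr
    _ ≤ _ := choose_mul_pow_mul_pow_le hp hq hx0 hx1 _ _

lemma one_sub_div_le_barrierSurvival (hp : 0 < p) (hq : 0 < q) (hpq : p + q = 1) (hb : Monotone b)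
    {x θ : ℝ} (hqx : q < x) (hx1 : x < 1) (hρ : p / (1 - x) * (q / x) ^ θ < 1) {S : ℕ}
    (hbS : ∀ j : ℕ, θ * (j + S) ≤ b j) (M : ℕ) :
    1 - ((q / x) ^ θ) ^ S / (1 - p / (1 - x) * (q / x) ^ θ) ≤ barrierSurvival p q b M := by
  have hx0 : 0 < x := hq.trans hqx
  have hy0 : 0 < q / x := div_pos hq hx0
  have hy1 : q / x ≤ 1 := (div_le_one hx0).2 hqx.le
  set z := (q / x) ^ θ
  set ρ := p / (1 - x) * z
  have hρ0 : 0 ≤ ρ := by have := sub_pos.2 hx1; positivity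
  have hfirst : q ^ (b 0 + 1) ≤ z ^ S * ρ ^ 0 := by
    rw [pow_zero, mul_one]
    refine (pow_le_pow_left₀ hq.le (le_div_self hq.le hx0 hx1.le) _).trans
      (pow_le_rpow_pow hy0 hy1 ?_)
    have := hbS 0
    push_cast at this ⊢
    linarith
  have hterm : ∀ n : ℕ, (barrierSeqCount b n : ℝ) * p ^ (n + 1) * q ^ (b (n + 1) + 1) ≤
      z ^ S * ρ ^ (n + 1) := fun n =>
    calc _ ≤ (p / (1 - x)) ^ (n + 1) * (q / x) ^ (b (n + 1) + 1) :=
          barrierSeqCount_mul_pow_mul_pow_le hp.le hq.le hb hx0 hx1 n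
      _ ≤ (p / (1 - x)) ^ (n + 1) * z ^ (n + 1 + S) := by
          gcongr
          refine pow_le_rpow_pow hy0 hy1 ?_
          have := hbS (n + 1)
          push_cast at this ⊢
          linarith
      _ = z ^ S * ρ ^ (n + 1) := by rw [mul_pow, pow_add]; ring
  have hcross : q ^ (b 0 + 1) +
      ∑ n ∈ range M, (barrierSeqCount b n : ℝ) * p ^ (n + 1) * q ^ (b (n + 1) + 1) ≤
        z ^ S / (1 - ρ) :=
    calc _ ≤ ∑ n ∈ range (M + 1), z ^ S * ρ ^ n := by
          rw [sum_range_succ']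
          linarith [sum_le_sum fun n (_ : n ∈ range M) => hterm n]
      _ = z ^ S * ∑ n ∈ range (M + 1), ρ ^ n := (mul_sum ..).symm
      _ ≤ z ^ S * (ρ ^ 0 / (1 - ρ)) := by
          gcongr
          rw [range_eq_Ico]
          exact geom_sum_Ico_le_of_lt_one hρ0 hρ
      _ = z ^ S / (1 - ρ) := by rw [pow_zero, mul_one_div]
  linarith [sum_range_add_barrierSurvival hpq hb M]

lemma exists_pos_le_barrierSurvival (hp : 0 < p) (hq : 0 < q) (hpq : p + q = 1)
    (hb : Monotone b) {θ : ℝ} (hθ : q / p < θ) (hbθ : ∀ᶠ n : ℕ in atTop, θ * n ≤ b n) :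
    ∃ c > 0, ∀ N, c ≤ barrierSurvival p q b N := by
  obtain ⟨x, hqx, hx1, hρ⟩ := exists_mul_rpow_lt_one hp hq hpq hθ
  have hx0 : 0 < x := hq.trans hqx
  set z := (q / x) ^ θ
  set ρ := p / (1 - x) * z
  have hz0 : 0 < z := Real.rpow_pos_of_pos (div_pos hq hx0) θ
  have hz1 : z < 1 :=
    Real.rpow_lt_one (div_pos hq hx0).le ((div_lt_one hx0).2 hqx) ((div_pos hq hp).trans hθ)
  obtain ⟨N₀, hN₀⟩ := eventually_atTop.1 hbθ
  obtain ⟨S, hS, hSN₀⟩ := (((tendsto_pow_atTop_nhds_zero_of_lt_one hz0.le hz1).eventually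
    (gt_mem_nhds (sub_pos.2 hρ))).and (eventually_ge_atTop N₀)).exists
  refine ⟨p ^ S * (1 - z ^ S / (1 - ρ)), ?_, le_barrierSurvival_of_shift hp.le hq.le hpq hb
    (one_sub_div_le_barrierSurvival hp hq hpq (fun i j hij => hb (by omega)) hqx hx1 hρ
      fun j => by exact_mod_cast hN₀ (j + S) (by omega))⟩
  exact mul_pos (pow_pos hp S) (sub_pos.2 ((div_lt_one (sub_pos.2 hρ)).2 hS))

end LinearBarrier

lemma exists_lt_and_eventually_mul_le_of_lt_liminf {f : ℕ → ℝ} {a : ℝ}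
    (h : (a : EReal) < liminf (fun n : ℕ => ((f n / n : ℝ) : EReal)) atTop) :
    ∃ θ, a < θ ∧ ∀ᶠ n : ℕ in atTop, θ * n ≤ f n := by
  obtain ⟨θ, haθ, hθ⟩ := EReal.lt_iff_exists_real_btwn.1 h
  refine ⟨θ, EReal.coe_lt_coe_iff.1 haθ, ?_⟩
  filter_upwards [eventually_lt_of_lt_liminf hθ, eventually_gt_atTop 0] with n hn hn0
  exact ((lt_div_iff₀ (by exact_mod_cast hn0)).1 (EReal.coe_lt_coe_iff.1 hn)).le

theorem stmt_12 (b : ℕ → ℕ) (hb : Monotone b) (p : ℝ) (hp : p ∈ Set.Ioo (0 : ℝ) 1)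
    (q : ℝ) (hq : q = 1 - p)
    (hθ : ((q / p : ℝ) : EReal) <
      Filter.liminf (fun n : ℕ => (((b n : ℝ) / n : ℝ) : EReal)) Filter.atTop) :
    ∑' n : ℕ, (barrierSeqCount b n : ℝ) * p ^ (n + 1) * q ^ (b (n + 1) + 1) <
      1 - q ^ (b 0 + 1) := by
  obtain ⟨hp0, hp1⟩ := hp
  have hq0 : 0 < q := by linarith
  have hpq : p + q = 1 := by linarith
  obtain ⟨θ, hqθ, hbθ⟩ := exists_lt_and_eventually_mul_le_of_lt_liminf hθ
  obtain ⟨c, hc, hsurv⟩ := exists_pos_le_barrierSurvival hp0 hq0 hpq hb hqθ hbθ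
  exact tsum_lt_of_le_barrierSurvival hp0.le hq0.le hpq hb hc hsurv
end

section
/- Let p ∈ (0,1), q = 1-p, and suppose the barrier satisfies liminf_{n→∞} b_n/n < q/p. Then equality holds: ∑_{n ≥ 0} f(n) · p^{n+1} · q^{b_{n+1}+1} = 1 - q^{b_0+1}. -/
open Finset Filter Topology

open scoped Classical in
noncomputable def barrierSeqs (b : ℕ → ℕ) (n : ℕ) : Finset (Fin (n + 1) → ℕ) :=
  {a ∈ Fintype.piFinset fun i => range (b i + 1) | Monotone a}

section barrierSeqs

variable {b : ℕ → ℕ} {n : ℕ}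

lemma mem_barrierSeqs {a : Fin (n + 1) → ℕ} :
    a ∈ barrierSeqs b n ↔ Monotone a ∧ ∀ i, a i ≤ b i := by
  simp [barrierSeqs, and_comm]

lemma barrierSeqCount_eq_card : barrierSeqCount b n = #(barrierSeqs b n) := by
  rw [barrierSeqCount, ← Nat.card_eq_finsetCard]
  exact Nat.card_congr (Equiv.subtypeEquivRight fun _ => mem_barrierSeqs.symm)

lemma last_le_of_mem_barrierSeqs {a : Fin (n + 1) → ℕ} (ha : a ∈ barrierSeqs b n) :
    a (Fin.last n) ≤ b n :=
  (mem_barrierSeqs.1 ha).2 _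

variable {M : Type*} [AddCommMonoid M]

lemma sum_barrierSeqs_zero (g : ℕ → M) :
    ∑ a ∈ barrierSeqs b 0, g (a (Fin.last 0)) = ∑ k ∈ range (b 0 + 1), g k := by
  refine sum_nbij' (fun a => a (Fin.last 0)) (fun k _ => k) (fun a ha => ?_) (fun k hk => ?_)
    (fun a _ => funext fun i => by rw [Subsingleton.elim (α := Fin 1) i (Fin.last 0)])
    (fun _ _ => rfl) (fun _ _ => rfl)
  · simpa [Nat.lt_succ_iff] using last_le_of_mem_barrierSeqs ha
  · refine mem_barrierSeqs.2 ⟨monotone_const, fun i => ?_⟩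
    simpa [Subsingleton.elim (α := Fin 1) i (Fin.last 0), Nat.lt_succ_iff] using hk

lemma snoc_mem_barrierSeqs {a : Fin (n + 1) → ℕ} (ha : a ∈ barrierSeqs b n) {k : ℕ}
    (hk : k ∈ Ico (a (Fin.last n)) (b (n + 1) + 1)) :
    (Fin.snoc a k : Fin (n + 2) → ℕ) ∈ barrierSeqs b (n + 1) := by
  obtain ⟨hmono, hle⟩ := mem_barrierSeqs.1 ha
  obtain ⟨hk₁, hk₂⟩ := mem_Ico.1 hk
  refine mem_barrierSeqs.2 ⟨?_, Fin.lastCases (by simpa [Nat.lt_succ_iff] using hk₂) fun i => ?_⟩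
  · simpa [Fin.insertNth_last'] using Fin.insertNth_last_monotone hmono k hk₁
  · simpa using hle i

lemma init_mem_barrierSeqs {a : Fin (n + 2) → ℕ} (ha : a ∈ barrierSeqs b (n + 1)) :
    Fin.init a ∈ barrierSeqs b n ∧
      a (Fin.last (n + 1)) ∈ Ico (Fin.init a (Fin.last n)) (b (n + 1) + 1) := by
  obtain ⟨hmono, hle⟩ := mem_barrierSeqs.1 ha
  refine ⟨mem_barrierSeqs.2 ⟨hmono.comp Fin.strictMono_castSucc.monotone, fun i => hle _⟩,
    mem_Ico.2 ⟨hmono (Fin.le_last _), Nat.lt_succ_of_le (hle _)⟩⟩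

lemma sum_barrierSeqs_succ (g : ℕ → M) :
    ∑ a ∈ barrierSeqs b (n + 1), g (a (Fin.last (n + 1))) =
      ∑ a ∈ barrierSeqs b n, ∑ k ∈ Ico (a (Fin.last n)) (b (n + 1) + 1), g k := by
  rw [← sum_sigma (barrierSeqs b n) (fun a => Ico (a (Fin.last n)) (b (n + 1) + 1)) fun x => g x.2]
  refine sum_nbij' (fun a => ⟨Fin.init a, a (Fin.last (n + 1))⟩) (fun x => Fin.snoc x.1 x.2)
    (fun a ha => mem_sigma.2 (init_mem_barrierSeqs ha))
    (fun x hx => snoc_mem_barrierSeqs (mem_sigma.1 hx).1 (mem_sigma.1 hx).2)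
    (fun a _ => Fin.snoc_init_self a) (fun x _ => by simp) (fun a _ => rfl)

end barrierSeqs

noncomputable def barrierMass (b : ℕ → ℕ) (p q : ℝ) (n : ℕ) : ℝ :=
  p ^ (n + 1) * ∑ a ∈ barrierSeqs b n, q ^ a (Fin.last n)

section barrierMass

variable {b : ℕ → ℕ} {p q : ℝ} {n : ℕ}

lemma barrierMass_zero (hpq : p + q = 1) : barrierMass b p q 0 = 1 - q ^ (b 0 + 1) := by
  obtain rfl : p = 1 - q := by linarith
  rw [barrierMass, sum_barrierSeqs_zero (fun k => q ^ k), zero_add, pow_one, mul_comm,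
    geom_sum_mul_neg]

lemma barrierMass_sub_succ (hb : Monotone b) (hpq : p + q = 1) (n : ℕ) :
    barrierMass b p q n - barrierMass b p q (n + 1) =
      barrierSeqCount b n * p ^ (n + 1) * q ^ (b (n + 1) + 1) := by
  obtain rfl : p = 1 - q := by linarith
  have hgeom : ∀ a ∈ barrierSeqs b n,
      ∑ k ∈ Ico (a (Fin.last n)) (b (n + 1) + 1), q ^ k * (1 - q) =
        q ^ a (Fin.last n) - q ^ (b (n + 1) + 1) := fun a ha => by
    rw [← sum_mul, geom_sum_Ico_mul_neg]
    exact ((last_le_of_mem_barrierSeqs ha).trans (hb n.le_succ)).trans (b (n + 1)).le_succ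
  have hsucc : barrierMass b (1 - q) q (n + 1) =
      (1 - q) ^ (n + 1) * ∑ a ∈ barrierSeqs b n, (q ^ a (Fin.last n) - q ^ (b (n + 1) + 1)) := by
    rw [barrierMass, sum_barrierSeqs_succ, ← sum_congr rfl hgeom]
    simp only [← sum_mul]
    ring
  rw [hsucc, sum_sub_distrib, sum_const, nsmul_eq_mul, barrierSeqCount_eq_card, barrierMass]
  ring

lemma barrierMass_nonneg (hp : 0 ≤ p) (hq : 0 ≤ q) : 0 ≤ barrierMass b p q n := by
  unfold barrierMass
  positivity

lemma sum_pow_last_barrierSeqs_le {x : ℝ} (hx₀ : 0 ≤ x) (hx₁ : x < 1) (n : ℕ) :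
    ∑ a ∈ barrierSeqs b n, x ^ a (Fin.last n) ≤ (1 - x)⁻¹ ^ (n + 1) := by
  induction n with
  | zero =>
    rw [sum_barrierSeqs_zero (fun k => x ^ k), zero_add, pow_one, ← Nat.Ico_zero_eq_range,
      ← one_div, ← pow_zero x]
    exact geom_sum_Ico_le_of_lt_one hx₀ hx₁
  | succ n ih =>
    calc ∑ a ∈ barrierSeqs b (n + 1), x ^ a (Fin.last (n + 1))
        = ∑ a ∈ barrierSeqs b n, ∑ k ∈ Ico (a (Fin.last n)) (b (n + 1) + 1), x ^ k :=
          sum_barrierSeqs_succ _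
      _ ≤ ∑ a ∈ barrierSeqs b n, x ^ a (Fin.last n) * (1 - x)⁻¹ :=
          sum_le_sum fun a _ => by simpa [div_eq_mul_inv] using geom_sum_Ico_le_of_lt_one hx₀ hx₁
      _ = (∑ a ∈ barrierSeqs b n, x ^ a (Fin.last n)) * (1 - x)⁻¹ := (sum_mul ..).symm
      _ ≤ (1 - x)⁻¹ ^ (n + 1) * (1 - x)⁻¹ := by gcongr
      _ = (1 - x)⁻¹ ^ (n + 2) := (pow_succ ..).symm

lemma barrierMass_le {t : ℝ} (hp : 0 ≤ p) (hq : 0 ≤ q) (ht₀ : 0 < t) (ht₁ : t ≤ 1)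
    (hqt : q * t < 1) (n : ℕ) :
    barrierMass b p q n ≤ (p / (1 - q * t)) ^ (n + 1) / t ^ b n := by
  have htilt : ∀ a ∈ barrierSeqs b n, q ^ a (Fin.last n) ≤ (q * t) ^ a (Fin.last n) / t ^ b n :=
    fun a ha => by
      rw [mul_pow, mul_div_assoc]
      refine le_mul_of_one_le_right (pow_nonneg hq _) ?_
      rw [one_le_div (pow_pos ht₀ _)]
      exact pow_le_pow_of_le_one ht₀.le ht₁ (last_le_of_mem_barrierSeqs ha)
  calc barrierMass b p q n
      ≤ p ^ (n + 1) * (∑ a ∈ barrierSeqs b n, (q * t) ^ a (Fin.last n) / t ^ b n) := by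
        unfold barrierMass
        exact mul_le_mul_of_nonneg_left (sum_le_sum htilt) (by positivity)
    _ ≤ p ^ (n + 1) * ((1 - q * t)⁻¹ ^ (n + 1) / t ^ b n) := by
        rw [← sum_div]
        gcongr
        exact sum_pow_last_barrierSeqs_le (by positivity) hqt n
    _ = (p / (1 - q * t)) ^ (n + 1) / t ^ b n := by
        rw [div_eq_mul_inv p, mul_pow]
        ring

end barrierMass

lemma barrierMass_antitone {b : ℕ → ℕ} {p q : ℝ} (hb : Monotone b) (hp : 0 ≤ p) (hq : 0 ≤ q)
    (hpq : p + q = 1) : Antitone (barrierMass b p q) :=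
  antitone_nat_of_succ_le fun n => sub_nonneg.1 <| by
    rw [barrierMass_sub_succ hb hpq]
    positivity

lemma HasDerivAt.eventually_nhdsLT_lt_of_neg {f : ℝ → ℝ} {f' x : ℝ} (hf : HasDerivAt f f' x)
    (hf' : f' < 0) : ∀ᶠ t in 𝓝[<] x, f x < f t := by
  have hslope := (hasDerivAt_iff_tendsto_slope.1 hf).mono_left
    (nhdsWithin_mono x fun _ ht => ne_of_lt ht)
  filter_upwards [hslope.eventually_lt_const hf', self_mem_nhdsWithin] with t hneg (ht : t < x)
  rw [slope_def_field, div_neg_iff] at hneg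
  rcases hneg with ⟨hpos, -⟩ | ⟨-, hx⟩ <;> linarith

/-- At `t = 1`, `(1 - q * t) * t ^ c` equals `p` and has derivative `c * p - q < 0`. -/
lemma exists_lt_one_sub_mul_mul_rpow {p q c : ℝ} (hpq : p + q = 1) (hc : c * p < q) :
    ∃ t ∈ Set.Ioo (0 : ℝ) 1, p < (1 - q * t) * t ^ c := by
  have hderiv : HasDerivAt (fun t : ℝ => (1 - q * t) * t ^ c)
      (-q * (1 : ℝ) ^ c + (1 - q * 1) * (c * (1 : ℝ) ^ (c - 1))) 1 :=
    (((hasDerivAt_id 1).const_mul q).const_sub 1 |>.congr_deriv (by simp)).mul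
      (Real.hasDerivAt_rpow_const (Or.inl one_ne_zero))
  have hp : 1 - q = p := by linarith
  have hneg : -q * (1 : ℝ) ^ c + (1 - q * 1) * (c * (1 : ℝ) ^ (c - 1)) < 0 := by
    simp only [Real.one_rpow, mul_one, hp]
    linarith
  obtain ⟨t, hlt, ht⟩ := ((hderiv.eventually_nhdsLT_lt_of_neg hneg).and
    (Ioo_mem_nhdsLT (zero_lt_one' ℝ))).exists
  refine ⟨t, ht, ?_⟩
  simpa [hp] using hlt

lemma exists_frequently_le_mul_of_liminf_lt {u : ℕ → ℝ} {r : ℝ}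
    (h : liminf (fun n : ℕ => ((u n / n : ℝ) : EReal)) atTop < r) :
    ∃ c : ℝ, c < r ∧ ∃ᶠ n : ℕ in atTop, u n ≤ c * n := by
  obtain ⟨c, hc, hcr⟩ := exists_between h
  have hfreq := frequently_lt_of_liminf_lt (by isBoundedDefault) hc
  lift c to ℝ using ⟨ne_top_of_lt hcr, ne_bot_of_gt hc⟩
  refine ⟨c, EReal.coe_lt_coe_iff.1 hcr,
    (hfreq.and_eventually (eventually_gt_atTop 0)).mono fun n ⟨hn, hn₀⟩ => ?_⟩
  exact ((div_lt_iff₀ (Nat.cast_pos.2 hn₀)).1 (EReal.coe_lt_coe_iff.1 hn)).le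

lemma tendsto_of_antitone_of_frequently_le {α : Type*} [LinearOrder α] [TopologicalSpace α]
    [OrderTopology α] {f g : ℕ → α} {l : α} (hf : Antitone f) (hfl : ∀ n, l ≤ f n)
    (hg : Tendsto g atTop (𝓝 l)) (hfg : ∃ᶠ n in atTop, f n ≤ g n) :
    Tendsto f atTop (𝓝 l) := by
  refine tendsto_order.2 ⟨fun a ha => .of_forall fun n => ha.trans_le (hfl n), fun a ha => ?_⟩
  obtain ⟨N, hfgN, hgN⟩ := (hfg.and_eventually (hg.eventually_lt_const ha)).exists
  exact eventually_atTop.2 ⟨N, fun n hn => (hf hn).trans_lt (hfgN.trans_lt hgN)⟩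

lemma hasSum_sub_succ_of_antitone {f : ℕ → ℝ} {l : ℝ} (hf : Antitone f)
    (hl : Tendsto f atTop (𝓝 l)) : HasSum (fun n => f n - f (n + 1)) (f 0 - l) := by
  refine (hasSum_iff_tendsto_nat_of_nonneg (fun n => sub_nonneg.2 (hf n.le_succ)) _).2 ?_
  simp_rw [sum_range_sub']
  exact tendsto_const_nhds.sub hl

lemma tendsto_barrierMass_atTop_nhds_zero {b : ℕ → ℕ} {p q c : ℝ} (hb : Monotone b) (hp : 0 < p)
    (hq : 0 ≤ q) (hpq : p + q = 1) (hc : c * p < q)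
    (hfreq : ∃ᶠ n : ℕ in atTop, (b n : ℝ) ≤ c * n) :
    Tendsto (barrierMass b p q) atTop (𝓝 0) := by
  obtain ⟨t, ⟨ht₀, ht₁⟩, hpt⟩ := exists_lt_one_sub_mul_mul_rpow hpq hc
  have hqt : q * t < 1 := by nlinarith
  have htc : 0 < t ^ c := Real.rpow_pos_of_pos ht₀ c
  set K := p / (1 - q * t)
  have hρ : K / t ^ c < 1 := by
    rw [div_lt_one htc, div_lt_iff₀ (by linarith)]
    linarith
  have hbound : ∀ n : ℕ, (b n : ℝ) ≤ c * n → barrierMass b p q n ≤ K * (K / t ^ c) ^ n := by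
    intro n hn
    have hpow : (t ^ c) ^ n ≤ t ^ b n := by
      rw [← Real.rpow_natCast, ← Real.rpow_mul ht₀.le, ← Real.rpow_natCast t]
      exact Real.rpow_le_rpow_of_exponent_ge ht₀ ht₁.le hn
    calc barrierMass b p q n ≤ K ^ (n + 1) / t ^ b n :=
          barrierMass_le hp.le hq ht₀ ht₁.le hqt n
      _ ≤ K ^ (n + 1) / (t ^ c) ^ n := by gcongr
      _ = K * (K / t ^ c) ^ n := by rw [div_pow K, pow_succ', mul_div_assoc]
  refine tendsto_of_antitone_of_frequently_le (barrierMass_antitone hb hp.le hq hpq)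
    (fun n => barrierMass_nonneg hp.le hq) ?_ (hfreq.mono hbound)
  simpa using (tendsto_pow_atTop_nhds_zero_of_lt_one (by positivity) hρ).const_mul K

theorem stmt_13 (b : ℕ → ℕ) (hb : Monotone b) (p : ℝ) (hp : p ∈ Set.Ioo (0 : ℝ) 1)
    (q : ℝ) (hq : q = 1 - p)
    (hθ : Filter.liminf (fun n : ℕ => (((b n : ℝ) / n : ℝ) : EReal)) Filter.atTop <
      ((q / p : ℝ) : EReal)) :
    ∑' n : ℕ, (barrierSeqCount b n : ℝ) * p ^ (n + 1) * q ^ (b (n + 1) + 1) =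
      1 - q ^ (b 0 + 1) := by
  obtain ⟨hp₀, hp₁⟩ := hp
  have hpq : p + q = 1 := by linarith
  have hq₀ : 0 ≤ q := by linarith
  obtain ⟨c, hcθ, hfreq⟩ := exists_frequently_le_mul_of_liminf_lt hθ
  have hlim := tendsto_barrierMass_atTop_nhds_zero hb hp₀ hq₀ hpq ((lt_div_iff₀ hp₀).1 hcθ) hfreq
  have hsum := hasSum_sub_succ_of_antitone (barrierMass_antitone hb hp₀.le hq₀ hpq) hlim
  simp only [barrierMass_sub_succ hb hpq, barrierMass_zero hpq, sub_zero] at hsum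
  exact hsum.tsum_eq
end

section
/- With the Bernoulli(q)-walk notation, if liminf_n b_n/n < q/p then almost surely there exists k with S(k) > b_{1+X(k)}, i.e., the stopping time τ = inf{k : S(k) > b_{1+X(k)}} is almost surely finite. -/
open MeasureTheory ProbabilityTheory

/-- `walkS X k ω` is the number of up-moves (`true`s) among the first `k+1` coordinates. -/
def walkS {Ω : Type*} (X : ℕ → Ω → Bool) (k : ℕ) (ω : Ω) : ℕ :=
  ∑ j ∈ Finset.range (k + 1), (X j ω).toNat

/-- `walkX X k ω = k - walkS X k ω` is the horizontal coordinate of the lattice path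
(started at `(-1,0)`) after `k+1` steps. -/
def walkX {Ω : Type*} (X : ℕ → Ω → Bool) (k : ℕ) (ω : Ω) : ℤ :=
  (k : ℤ) - (walkS X k ω : ℤ)

open Filter Topology

/-!
By the strong law of large numbers `S(k)/(k+1) → q` almost surely, so `1 + X(k) = k + 1 - S(k)`
grows like `p k`. Since it increases by at most one per step it hits every level `n ≥ 1`, at a
time `k_n → ∞` with `S(k_n)/n → q/p`. For the infinitely many `n` with `b_n/n < c < q/p` this
gives `b_{1 + X(k_n)} = b_n < S(k_n)`.
-/

theorem Nat.exists_eq_of_le_add_one {x : ℕ → ℕ} (hstep : ∀ k, x (k + 1) ≤ x k + 1) {n : ℕ}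
    (h0 : x 0 ≤ n) (hn : ∃ k, n ≤ x k) : ∃ k, x k = n := by
  obtain ⟨k, hk⟩ := hn
  induction k with
  | zero => exact ⟨0, le_antisymm h0 hk⟩
  | succ k ih =>
    by_cases hkn : n ≤ x k
    · exact ih hkn
    · exact ⟨k + 1, by have := hstep k; omega⟩

theorem Filter.frequently_lt_of_liminf_lt_of_tendsto {ι : Type*} {l : Filter ι} {f g : ι → ℝ}
    {L : ℝ} (hf : liminf (fun i => (f i : EReal)) l < L) (hg : Tendsto g l (𝓝 L)) :
    ∃ᶠ i in l, f i < g i := by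
  obtain ⟨c, hfc, hcL⟩ := exists_between hf
  have hcg : ∀ᶠ i in l, c < g i :=
    ((continuous_coe_real_ereal.tendsto L).comp hg).eventually_const_lt hcL
  exact ((frequently_lt_of_liminf_lt (h := hfc)).and_eventually hcg).mono
    fun i ⟨hfi, hgi⟩ => EReal.coe_lt_coe_iff.1 (hfi.trans hgi)

section LatticePath

variable {s : ℕ → ℕ} {q : ℝ}

theorem tendsto_sub_div_of_tendsto_div (hle : ∀ k, s k ≤ k + 1)
    (hlim : Tendsto (fun k : ℕ => (s k : ℝ) / (k + 1)) atTop (𝓝 q)) :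
    Tendsto (fun k : ℕ => ((k + 1 - s k : ℕ) : ℝ) / (k + 1)) atTop (𝓝 (1 - q)) := by
  refine (tendsto_const_nhds.sub hlim).congr fun k => ?_
  rw [Nat.cast_sub (hle k)]
  push_cast
  field_simp

theorem tendsto_sub_atTop_of_tendsto_div (hle : ∀ k, s k ≤ k + 1) (hq : q < 1)
    (hlim : Tendsto (fun k : ℕ => (s k : ℝ) / (k + 1)) atTop (𝓝 q)) :
    Tendsto (fun k => k + 1 - s k) atTop atTop := by
  rw [← tendsto_natCast_atTop_iff (R := ℝ)]
  have hk : Tendsto (fun k : ℕ => (k : ℝ) + 1) atTop atTop :=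
    tendsto_atTop_add_const_right _ 1 tendsto_natCast_atTop_atTop
  refine ((tendsto_sub_div_of_tendsto_div hle hlim).pos_mul_atTop (by linarith) hk).congr
    fun k => ?_
  field_simp

theorem tendsto_div_sub_of_tendsto_div (hle : ∀ k, s k ≤ k + 1) (hq : q < 1)
    (hlim : Tendsto (fun k : ℕ => (s k : ℝ) / (k + 1)) atTop (𝓝 q)) :
    Tendsto (fun k => (s k : ℝ) / (k + 1 - s k : ℕ)) atTop (𝓝 (q / (1 - q))) := by
  refine (hlim.div (tendsto_sub_div_of_tendsto_div hle hlim) (by linarith)).congr fun k => ?_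
  exact div_div_div_cancel_right₀ (by positivity) _ _

theorem exists_hitting_times (hmono : Monotone s) (hle : ∀ k, s k ≤ k + 1) (hq : q < 1)
    (hlim : Tendsto (fun k : ℕ => (s k : ℝ) / (k + 1)) atTop (𝓝 q)) :
    ∃ τ : ℕ → ℕ, Tendsto τ atTop atTop ∧ ∀ n, τ n + 1 - s (τ n) = max n 1 := by
  have hstep : ∀ k, k + 1 + 1 - s (k + 1) ≤ k + 1 - s k + 1 := fun k => by
    have := hmono (Nat.le_add_right k 1); have := hle k; omega
  have hhit : ∀ n, ∃ k, k + 1 - s k = max n 1 := fun n =>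
    Nat.exists_eq_of_le_add_one (x := fun k => k + 1 - s k) hstep (by omega)
      ((tendsto_sub_atTop_of_tendsto_div hle hq hlim).eventually_ge_atTop _).exists
  choose τ hτ using hhit
  refine ⟨τ, tendsto_atTop_atTop.2 fun K => ⟨K + 1, fun n hn => ?_⟩, hτ⟩
  have := hτ n
  omega

theorem exists_lt_of_liminf_lt (hmono : Monotone s) (hle : ∀ k, s k ≤ k + 1) (hq : q < 1)
    (hlim : Tendsto (fun k : ℕ => (s k : ℝ) / (k + 1)) atTop (𝓝 q)) {b : ℕ → ℕ}
    (hb : liminf (fun n : ℕ => (((b n : ℝ) / n : ℝ) : EReal)) atTop <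
      ((q / (1 - q) : ℝ) : EReal)) :
    ∃ k, b (k + 1 - s k) < s k := by
  obtain ⟨τ, hτ_top, hτ⟩ := exists_hitting_times hmono hle hq hlim
  have hτ_eq : ∀ᶠ n in atTop, τ n + 1 - s (τ n) = n :=
    (eventually_ge_atTop 1).mono fun n hn => by rw [hτ, max_eq_left hn]
  have hg : Tendsto (fun n : ℕ => (s (τ n) : ℝ) / n) atTop (𝓝 (q / (1 - q))) :=
    ((tendsto_div_sub_of_tendsto_div hle hq hlim).comp hτ_top).congr' <|
      hτ_eq.mono fun n hn => by simp only [Function.comp_apply, hn]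
  obtain ⟨n, hlt, hn⟩ :=
    ((frequently_lt_of_liminf_lt_of_tendsto hb hg).and_eventually hτ_eq).exists
  have hn0 : 0 < n := by have := hτ n; omega
  refine ⟨τ n, ?_⟩
  rw [hn]
  exact_mod_cast (div_lt_div_iff_of_pos_right (Nat.cast_pos.2 hn0)).1 hlt

end LatticePath

theorem identDistrib_of_measure_eq_true {Ω Ω' : Type*} [MeasurableSpace Ω] [MeasurableSpace Ω']
    {μ : Measure Ω} {ν : Measure Ω'} [IsProbabilityMeasure μ] [IsProbabilityMeasure ν]
    {f : Ω → Bool} {g : Ω' → Bool} (hf : Measurable f) (hg : Measurable g)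
    (h : μ {ω | f ω = true} = ν {ω | g ω = true}) : IdentDistrib f g μ ν where
  aemeasurable_fst := hf.aemeasurable
  aemeasurable_snd := hg.aemeasurable
  map_eq := by
    have : IsProbabilityMeasure (μ.map f) := Measure.isProbabilityMeasure_map hf.aemeasurable
    have : IsProbabilityMeasure (ν.map g) := Measure.isProbabilityMeasure_map hg.aemeasurable
    have htrue : μ.map f {true} = ν.map g {true} := by
      rwa [Measure.map_apply hf (measurableSet_singleton _),
        Measure.map_apply hg (measurableSet_singleton _)]
    refine Measure.ext_of_singleton fun
      | true => htrue
      | false => ?_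
    have hfalse : ({false} : Set Bool) = {true}ᶜ := by ext b; simp
    rw [hfalse, prob_compl_eq_one_sub (measurableSet_singleton _),
      prob_compl_eq_one_sub (measurableSet_singleton _), htrue]

theorem ae_tendsto_walkS_div {Ω : Type*} [MeasurableSpace Ω] {μ : Measure Ω}
    [IsProbabilityMeasure μ] {X : ℕ → Ω → Bool} (hmeas : ∀ i, Measurable (X i))
    (hindep : iIndepFun X μ) {q : ℝ} (hq : 0 ≤ q)
    (hdist : ∀ i, μ {ω | X i ω = true} = ENNReal.ofReal q) :
    ∀ᵐ ω ∂μ, Tendsto (fun k : ℕ => (walkS X k ω : ℝ) / (k + 1)) atTop (𝓝 q) := by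
  set Y : ℕ → Ω → ℝ := fun i ω => ((X i ω).toNat : ℝ)
  have hφ : Measurable fun b : Bool => (b.toNat : ℝ) := measurable_of_countable _
  have hint : Integrable (Y 0) μ :=
    .of_bound (hφ.comp (hmeas 0)).aestronglyMeasurable 1
      (ae_of_all _ fun ω => by simp [Y, Bool.toNat_le])
  have hmean : μ[Y 0] = q := by
    have : Y 0 = {ω | X 0 ω = true}.indicator 1 := by
      ext ω; cases h : X 0 ω <;> simp [Y, h]
    rw [this, integral_indicator_one (measurableSet_eq_fun (hmeas 0) measurable_const), measureReal_def,
      hdist, ENNReal.toReal_ofReal hq]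
  have hslln := strong_law_ae_real Y hint (fun i j hij => (hindep.indepFun hij).comp hφ hφ)
    fun i => (identDistrib_of_measure_eq_true (hmeas i) (hmeas 0)
      ((hdist i).trans (hdist 0).symm)).comp hφ
  filter_upwards [hslln] with ω hω
  rw [hmean] at hω
  refine (hω.comp (tendsto_add_atTop_nat 1)).congr fun k => ?_
  simp [walkS, Y]

theorem walkS_mono {Ω : Type*} (X : ℕ → Ω → Bool) (ω : Ω) : Monotone fun k => walkS X k ω :=
  fun _ _ hkl => Finset.sum_le_sum_of_subset (Finset.range_subset_range.2 (by omega))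

theorem walkS_le {Ω : Type*} (X : ℕ → Ω → Bool) (k : ℕ) (ω : Ω) : walkS X k ω ≤ k + 1 :=
  (Finset.sum_le_card_nsmul _ _ 1 fun j _ => Bool.toNat_le _).trans (by simp)

theorem toNat_one_add_walkX {Ω : Type*} (X : ℕ → Ω → Bool) (k : ℕ) (ω : Ω) :
    (1 + walkX X k ω).toNat = k + 1 - walkS X k ω := by
  have := walkS_le X k ω
  rw [walkX]
  omega

theorem stmt_15_general {Ω : Type*} [MeasurableSpace Ω] (μ : Measure Ω) [IsProbabilityMeasure μ]
    (q : ℝ) (hq : q ∈ Set.Ioo (0 : ℝ) 1) (p : ℝ) (hp : p = 1 - q)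
    (X : ℕ → Ω → Bool) (hmeas : ∀ i, Measurable (X i))
    (hindep : iIndepFun X μ)
    (hdist : ∀ i, μ {ω | X i ω = true} = ENNReal.ofReal q)
    (b : ℕ → ℕ)
    (hθ : Filter.liminf (fun n : ℕ => (((b n : ℝ) / n : ℝ) : EReal)) Filter.atTop <
      ((q / p : ℝ) : EReal)) :
    μ {ω | ∃ k : ℕ, b (1 + walkX X k ω).toNat < walkS X k ω} = 1 := by
  subst hp
  refine (measure_congr (eventuallyEq_univ.2 ?_)).trans measure_univ
  filter_upwards [ae_tendsto_walkS_div hmeas hindep hq.1.le hdist] with ω hω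
  obtain ⟨k, hk⟩ := exists_lt_of_liminf_lt (walkS_mono X ω) (walkS_le X · ω) hq.2 hω hθ
  exact ⟨k, by rwa [toNat_one_add_walkX]⟩

theorem stmt_15 {Ω : Type*} [MeasurableSpace Ω] (μ : Measure Ω) [IsProbabilityMeasure μ]
    (q : ℝ) (hq : q ∈ Set.Ioo (0 : ℝ) 1) (p : ℝ) (hp : p = 1 - q)
    (X : ℕ → Ω → Bool) (hmeas : ∀ i, Measurable (X i))
    (hindep : iIndepFun X μ)
    (hdist : ∀ i, μ {ω | X i ω = true} = ENNReal.ofReal q)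
    (b : ℕ → ℕ) (hb : Monotone b)
    (hθ : Filter.liminf (fun n : ℕ => (((b n : ℝ) / n : ℝ) : EReal)) Filter.atTop <
      ((q / p : ℝ) : EReal)) :
    μ {ω | ∃ k : ℕ, b (1 + walkX X k ω).toNat < walkS X k ω} = 1 :=
  stmt_15_general μ q hq p hp X hmeas hindep hdist b hθ
end

section
/- For p ∈ (0,1), q = 1-p, and the linear barrier b_j = rj + s with integer r ≥ 0 satisfying r < q/p, the identity ∑_{n≥0} ((s+1)/(n+1)) · binom(s+(n+1)(r+1), n) · p^{n+1} · q^{r(n+1)+s+1} = 1 - q^{s+1} holds as a convergent series of real numbers. -/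
/-!
With `q = 1 - p` and `y = p q^r`, the `n`-th summand is `q^(s+1) R(s+1, n+1) y^(n+1)`, where
`R(ℓ, k) = ℓ / ((r+1) k + ℓ) · C((r+1) k + ℓ, k)` are the Raney numbers, the coefficients of
`B(y)^ℓ` for the power series `B = 1 + y B^(r+1)`. So it suffices that
`F ℓ := ∑ₖ R(ℓ, k) y^k` equals `q^(-ℓ)`.

The Pascal-type recurrence `R(ℓ+1, k+1) = R(ℓ, k+1) + R(ℓ+r+1, k)` gives, by induction, the
bound `q^ℓ ∑_{k<N} R(ℓ, k) y^k ≤ 1`, hence convergence. The convolution identity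
`R(a+b, ·) = R(a, ·) * R(b, ·)` gives `F ℓ = (F 1)^ℓ`, and the recurrence at `ℓ = 0` gives
`F 1 = 1 + y F (r+1)`, so `z = q F 1 ∈ [0, 1]` solves `z = q + p z^(r+1)`. As `(r+1) p < 1`,
the only root in `[0, 1]` is `z = 1`.
-/

open Finset

/-- The `k = 0` case is split off because `0 / 0 = 0` would give `raney m 0 0 = 0`. -/
noncomputable def raney (m ℓ k : ℕ) : ℝ :=
  if k = 0 then 1 else ℓ / ((m * k + ℓ : ℕ) : ℝ) * ((m * k + ℓ).choose k : ℝ)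

@[simp]
lemma raney_zero_right (m ℓ : ℕ) : raney m ℓ 0 = 1 := if_pos rfl

lemma raney_zero_left (m : ℕ) {k : ℕ} (hk : k ≠ 0) : raney m 0 k = 0 := by
  simp [raney, hk]

lemma raney_succ_right (m ℓ k : ℕ) :
    raney m ℓ (k + 1) =
      ℓ / ((m * (k + 1) + ℓ : ℕ) : ℝ) * ((m * (k + 1) + ℓ).choose (k + 1) : ℝ) :=
  if_neg k.succ_ne_zero

lemma raney_of_ne_zero (m : ℕ) {ℓ : ℕ} (hℓ : ℓ ≠ 0) (k : ℕ) :
    raney m ℓ k = ℓ / ((m * k + ℓ : ℕ) : ℝ) * ((m * k + ℓ).choose k : ℝ) := by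
  rcases k with _ | k
  · simp [hℓ]
  · exact raney_succ_right m ℓ k

lemma raney_nonneg (m ℓ k : ℕ) : 0 ≤ raney m ℓ k := by
  unfold raney
  split_ifs <;> positivity

lemma raney_succ_succ_eq_choose (m s n : ℕ) :
    raney m (s + 1) (n + 1) = ((s : ℝ) + 1) / ((n : ℝ) + 1) * ((s + (n + 1) * m).choose n : ℝ) := by
  have hN : m * (n + 1) + (s + 1) = s + (n + 1) * m + 1 := by ring
  have hchoose : ((s + (n + 1) * m : ℕ) + 1 : ℝ) * (s + (n + 1) * m).choose n =
      (s + (n + 1) * m + 1).choose (n + 1) * ((n : ℝ) + 1) := by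
    exact_mod_cast Nat.add_one_mul_choose_eq (s + (n + 1) * m) n
  rw [raney_succ_right, hN, div_mul_eq_mul_div, div_mul_eq_mul_div,
    div_eq_div_iff (by positivity) (by positivity)]
  push_cast at hchoose ⊢
  linear_combination (-(s : ℝ) - 1) * hchoose

lemma raney_succ_succ {m : ℕ} (hm : m ≠ 0) (ℓ k : ℕ) :
    raney m (ℓ + 1) (k + 1) = raney m ℓ (k + 1) + raney m (ℓ + m) k := by
  set N := m * (k + 1) + ℓ with hN
  have hkN : k ≤ N := by nlinarith [Nat.one_le_iff_ne_zero.2 hm]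
  have hNcast : (N : ℝ) = m * (k + 1) + ℓ := by rw [hN]; push_cast; ring
  have hsucc : ((N + 1).choose (k + 1) : ℝ) = (N + 1) * N.choose k / (k + 1) := by
    rw [eq_div_iff (by positivity)]
    exact_mod_cast (Nat.add_one_mul_choose_eq N k).symm
  have hright : (N.choose (k + 1) : ℝ) = N.choose k * (N - k) / (k + 1) := by
    rw [eq_div_iff (by positivity), ← Nat.cast_sub hkN]
    exact_mod_cast Nat.choose_succ_right_eq N k
  have h1 : m * (k + 1) + (ℓ + 1) = N + 1 := by omega
  have h2 : m * k + (ℓ + m) = N := by rw [hN]; ring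
  have hNpos : (0 : ℝ) < N := by rw [hNcast]; positivity
  rw [raney_succ_right, raney_succ_right, raney_of_ne_zero m (by omega), h1, h2, ← hN]
  push_cast
  rw [hsucc, hright]
  field_simp
  rw [hNcast]
  ring

theorem raney_add_eq_sum_antidiagonal {m : ℕ} (hm : m ≠ 0) (a b k : ℕ) :
    raney m (a + b) k = ∑ ij ∈ antidiagonal k, raney m a ij.1 * raney m b ij.2 := by
  induction k generalizing a b with
  | zero => simp
  | succ k ihk =>
    induction b with
    | zero => simp [Nat.sum_antidiagonal_succ', raney_zero_left]
    | succ b ihb =>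
      rw [← add_assoc, raney_succ_succ hm, ihb, add_assoc, ihk, Nat.sum_antidiagonal_succ',
        Nat.sum_antidiagonal_succ']
      simp only [raney_succ_succ hm b, raney_zero_right, mul_add, sum_add_distrib]
      ring

lemma sum_range_raney_succ_mul_pow {m : ℕ} (hm : m ≠ 0) (ℓ N : ℕ) (y : ℝ) :
    ∑ k ∈ range (N + 1), raney m (ℓ + 1) k * y ^ k =
      ∑ k ∈ range (N + 1), raney m ℓ k * y ^ k + y * ∑ k ∈ range N, raney m (ℓ + m) k * y ^ k := by
  have hshift : ∀ k, raney m (ℓ + m) k * y ^ (k + 1) = y * (raney m (ℓ + m) k * y ^ k) :=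
    fun k => by ring
  simp only [sum_range_succ', raney_succ_succ hm, raney_zero_right, add_mul, sum_add_distrib,
    hshift, ← mul_sum]
  ring

lemma pow_mul_sum_range_raney_le (r : ℕ) {p : ℝ} (hp0 : 0 ≤ p) (hp1 : p ≤ 1) (N ℓ : ℕ) :
    (1 - p) ^ ℓ * ∑ k ∈ range N, raney (r + 1) ℓ k * (p * (1 - p) ^ r) ^ k ≤ 1 := by
  induction N generalizing ℓ with
  | zero => simp
  | succ N ihN =>
    induction ℓ with
    | zero => simp [sum_range_succ', raney_zero_left]
    | succ ℓ ihℓ =>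
      have hsplit : (1 - p) ^ (ℓ + 1) *
            ∑ k ∈ range (N + 1), raney (r + 1) (ℓ + 1) k * (p * (1 - p) ^ r) ^ k =
          (1 - p) * ((1 - p) ^ ℓ * ∑ k ∈ range (N + 1), raney (r + 1) ℓ k * (p * (1 - p) ^ r) ^ k) +
            p * ((1 - p) ^ (ℓ + (r + 1)) *
              ∑ k ∈ range N, raney (r + 1) (ℓ + (r + 1)) k * (p * (1 - p) ^ r) ^ k) := by
        rw [sum_range_raney_succ_mul_pow r.succ_ne_zero]
        ring
      rw [hsplit]
      nlinarith [ihℓ, ihN (ℓ + (r + 1))]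

lemma tsum_raney_zero_mul_pow (m : ℕ) (y : ℝ) : ∑' k, raney m 0 k * y ^ k = 1 := by
  rw [tsum_eq_single 0 fun k hk => by rw [raney_zero_left m hk, zero_mul]]
  simp

lemma tsum_raney_one_mul_pow {m : ℕ} (hm : m ≠ 0) {y : ℝ}
    (h : Summable fun k => raney m 1 k * y ^ k) :
    ∑' k, raney m 1 k * y ^ k = 1 + y * ∑' k, raney m m k * y ^ k := by
  have hshift : ∀ k, raney m 1 (k + 1) * y ^ (k + 1) = y * (raney m m k * y ^ k) := fun k => by
    rw [raney_succ_succ hm, raney_zero_left m k.succ_ne_zero, zero_add, zero_add, pow_succ]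
    ring
  rw [h.tsum_eq_zero_add, tsum_congr hshift, tsum_mul_left]
  simp

lemma tsum_raney_mul_pow_add {m : ℕ} (hm : m ≠ 0) {y : ℝ} (hy : 0 ≤ y) {a b : ℕ}
    (ha : Summable fun k => raney m a k * y ^ k) (hb : Summable fun k => raney m b k * y ^ k) :
    ∑' k, raney m (a + b) k * y ^ k = (∑' k, raney m a k * y ^ k) * ∑' k, raney m b k * y ^ k := by
  have hnorm : ∀ ℓ, Summable (fun k => raney m ℓ k * y ^ k) →
      Summable fun k => ‖raney m ℓ k * y ^ k‖ := fun ℓ h =>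
    h.congr fun k => (Real.norm_of_nonneg (mul_nonneg (raney_nonneg _ _ _) (by positivity))).symm
  rw [tsum_mul_tsum_eq_tsum_sum_antidiagonal_of_summable_norm (hnorm a ha) (hnorm b hb)]
  refine tsum_congr fun k => ?_
  rw [raney_add_eq_sum_antidiagonal hm, sum_mul]
  refine sum_congr rfl fun ij hij => ?_
  rw [← mem_antidiagonal.1 hij, pow_add]
  ring

lemma eq_one_of_eq_sub_add_mul_pow {p z : ℝ} {m : ℕ} (hp : 0 ≤ p) (hmp : m * p < 1)
    (hz0 : 0 ≤ z) (hz1 : z ≤ 1) (h : z = 1 - p + p * z ^ m) : z = 1 := by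
  have hgeom : ∑ i ∈ range m, z ^ i ≤ m := by
    simpa using sum_le_sum fun i (_ : i ∈ range m) => pow_le_one₀ hz0 hz1
  have hfactor : (z - 1) * (1 - p * ∑ i ∈ range m, z ^ i) = 0 := by
    linear_combination h - p * geom_sum_mul z m
  have hpos : 0 < 1 - p * ∑ i ∈ range m, z ^ i := by nlinarith
  linarith [(mul_eq_zero.1 hfactor).resolve_right hpos.ne']

lemma tsum_raney_mul_pow_eq_pow {m : ℕ} (hm : m ≠ 0) {y : ℝ} (hy : 0 ≤ y)
    (h : ∀ ℓ, Summable fun k => raney m ℓ k * y ^ k) (ℓ : ℕ) :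
    ∑' k, raney m ℓ k * y ^ k = (∑' k, raney m 1 k * y ^ k) ^ ℓ := by
  induction ℓ with
  | zero => simp [tsum_raney_zero_mul_pow]
  | succ ℓ ih => rw [pow_succ, ← ih, tsum_raney_mul_pow_add hm hy (h ℓ) (h 1)]

theorem hasSum_raney_mul_pow {r : ℕ} {p : ℝ} (hp : 0 ≤ p) (hrp : (r + 1) * p < 1) (ℓ : ℕ) :
    HasSum (fun k => raney (r + 1) ℓ k * (p * (1 - p) ^ r) ^ k) ((1 - p) ^ ℓ)⁻¹ := by
  have hq : 0 < 1 - p := by nlinarith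
  have hnonneg : ∀ ℓ k, 0 ≤ raney (r + 1) ℓ k * (p * (1 - p) ^ r) ^ k :=
    fun ℓ k => mul_nonneg (raney_nonneg _ _ _) (by positivity)
  have hbound : ∀ ℓ N, ∑ k ∈ range N, raney (r + 1) ℓ k * (p * (1 - p) ^ r) ^ k ≤
      1 / (1 - p) ^ ℓ := fun ℓ N => by
    rw [le_div_iff₀' (by positivity)]
    exact pow_mul_sum_range_raney_le r hp (by linarith) N ℓ
  have hsum : ∀ ℓ, Summable fun k => raney (r + 1) ℓ k * (p * (1 - p) ^ r) ^ k :=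
    fun ℓ => summable_of_sum_range_le (hnonneg ℓ) (hbound ℓ)
  have hpow := tsum_raney_mul_pow_eq_pow r.add_one_ne_zero (by positivity) hsum
  have hrec := tsum_raney_one_mul_pow r.add_one_ne_zero (hsum 1)
  have hG1 := Real.tsum_le_of_sum_range_le (hnonneg 1) (hbound 1)
  rw [hpow (r + 1)] at hrec
  set G := ∑' k, raney (r + 1) 1 k * (p * (1 - p) ^ r) ^ k
  have hG0 : 0 ≤ G := tsum_nonneg (hnonneg 1)
  have hz : (1 - p) * G = 1 := by
    refine eq_one_of_eq_sub_add_mul_pow hp (by exact_mod_cast hrp) (by positivity) ?_ ?_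
    · rwa [← le_div_iff₀' hq, ← pow_one (1 - p)]
    · rw [mul_pow]
      linear_combination (1 - p) * hrec
  convert (hsum ℓ).hasSum
  rw [hpow, eq_comm]
  refine eq_inv_of_mul_eq_one_left ?_
  rw [← mul_pow, mul_comm, hz, one_pow]

theorem stmt_19 (r s : ℕ) (p : ℝ) (hp : p ∈ Set.Ioo (0 : ℝ) 1) (q : ℝ) (hq : q = 1 - p)
    (hr : (r : ℝ) < q / p) :
    Summable (fun n : ℕ =>
      ((s : ℝ) + 1) / ((n : ℝ) + 1) * ((s + (n + 1) * (r + 1)).choose n : ℝ) *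
        p ^ (n + 1) * q ^ (r * (n + 1) + s + 1)) ∧
    ∑' n : ℕ,
        ((s : ℝ) + 1) / ((n : ℝ) + 1) * ((s + (n + 1) * (r + 1)).choose n : ℝ) *
          p ^ (n + 1) * q ^ (r * (n + 1) + s + 1) =
      1 - q ^ (s + 1) := by
  subst hq
  have hrp : ((r : ℝ) + 1) * p < 1 := by
    have := (lt_div_iff₀ hp.1).1 hr
    linarith
  have hterm : ∀ n : ℕ,
      ((s : ℝ) + 1) / ((n : ℝ) + 1) * ((s + (n + 1) * (r + 1)).choose n : ℝ) *
          p ^ (n + 1) * (1 - p) ^ (r * (n + 1) + s + 1) =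
        (1 - p) ^ (s + 1) * (raney (r + 1) (s + 1) (n + 1) * (p * (1 - p) ^ r) ^ (n + 1)) := by
    intro n
    rw [raney_succ_succ_eq_choose]
    ring
  have hsum := ((hasSum_nat_add_iff' 1).2 (hasSum_raney_mul_pow hp.1.le hrp (s + 1))).mul_left
    ((1 - p) ^ (s + 1))
  simp only [← hterm, sum_range_one, raney_zero_right, pow_zero, mul_one] at hsum
  rw [mul_sub, mul_inv_cancel₀ (pow_pos (sub_pos.2 hp.2) _).ne', mul_one] at hsum
  exact ⟨hsum.summable, hsum.tsum_eq⟩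
end
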